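/- Let α, λ, β > 0 and f_V(v) = √(2/π) e^{-v²/2} for v > 0 (half-normal density). Then as x → -∞, ∫₀^∞ (1/π) e^{-(1+β²)((x-αv)λ/α)²/2} · (1/(β(1+β²))) · ((x-αv)λ/α)^{-2} f_V(v) dv ~ (α³/(πλ⁴β(1+β²)²)) √(2/π) |x|^{-3} e^{-(λ²/(2α²))(1+β²)x²}. -/

import Mathlib

/-!
Write `y = -x`. On `v > 0` the integrand is a constant multiple of
`exp (-(a (y + α v)² + v²) / 2) / (y + α v)²` with `a = (1 + β²) l² / α²`. Substituting
`s = a α y v` and setting `t = 1 / (a y²)` pulls out the factor `exp (-a y² / 2) / (a α y³)`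
and leaves `∫₀^∞ (1 + t s)⁻² exp (-s - κ t s²) ds` with `κ = (1 + 1 / (a α²)) / 2`, which
tends to `∫₀^∞ exp (-s) ds = 1` as `t → 0⁺` by dominated convergence, the integrand being
bounded by `exp (-s)`.
-/

open Real MeasureTheory Filter Set

/-- Half-normal density (on v > 0). -/
noncomputable def halfNormalPdf (v : ℝ) : ℝ :=
  if 0 < v then Real.sqrt (2 / π) * Real.exp (-v ^ 2 / 2) else 0

open Topology

noncomputable def laplaceKernel (κ t s : ℝ) : ℝ :=
  ((1 + t * s) ^ 2)⁻¹ * exp (-s - κ * t * s ^ 2)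

lemma laplaceKernel_nonneg (κ t s : ℝ) : 0 ≤ laplaceKernel κ t s := by
  unfold laplaceKernel; positivity

lemma laplaceKernel_le_exp_neg {κ t s : ℝ} (hκ : 0 ≤ κ) (ht : 0 ≤ t) (hs : 0 ≤ s) :
    laplaceKernel κ t s ≤ exp (-s) := by
  have h_inv : ((1 + t * s) ^ 2)⁻¹ ≤ 1 :=
    inv_le_one_of_one_le₀ (one_le_pow₀ (le_add_of_nonneg_right (by positivity)))
  have h_exp : exp (-s - κ * t * s ^ 2) ≤ exp (-s) :=
    exp_le_exp.mpr (sub_le_self _ (by positivity))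
  simpa [laplaceKernel] using mul_le_mul h_inv h_exp (exp_pos _).le zero_le_one

lemma tendsto_integral_laplaceKernel {κ : ℝ} (hκ : 0 ≤ κ) :
    Tendsto (fun t => ∫ s in Ioi 0, laplaceKernel κ t s) (𝓝[≥] 0) (𝓝 1) := by
  rw [← integral_exp_neg_Ioi_zero]
  refine tendsto_integral_filter_of_dominated_convergence (fun s => exp (-s)) ?_ ?_
    (integrableOn_exp_neg_Ioi 0) ?_
  · exact .of_forall fun t => by unfold laplaceKernel; fun_prop
  · filter_upwards [self_mem_nhdsWithin] with t (ht : 0 ≤ t)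
    filter_upwards [ae_restrict_mem measurableSet_Ioi] with s (hs : 0 < s)
    rw [norm_of_nonneg (laplaceKernel_nonneg κ t s)]
    exact laplaceKernel_le_exp_neg hκ ht hs.le
  · refine .of_forall fun s => ?_
    have h_cont : ContinuousAt (fun t => laplaceKernel κ t s) 0 := by
      unfold laplaceKernel
      fun_prop (disch := simp)
    simpa [laplaceKernel] using h_cont.tendsto.mono_left nhdsWithin_le_nhds

lemma integral_exp_quadratic_div_sq_eq (b : ℝ) {a p y : ℝ} (ha : 0 < a) (hp : 0 < p)
    (hy : 0 < y) :
    ∫ v in Ioi 0, exp (-(a * (y + p * v) ^ 2 + b * v ^ 2) / 2) / (y + p * v) ^ 2 =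
      exp (-(a * y ^ 2) / 2) / (a * p * y ^ 3) *
        ∫ s in Ioi 0, laplaceKernel ((1 + b / (a * p ^ 2)) / 2) (a * y ^ 2)⁻¹ s := by
  set C := exp (-(a * y ^ 2) / 2) / (a * p * y ^ 3)
  have hm : 0 < a * p * y := by positivity
  have h_subst : EqOn
      (fun v => exp (-(a * (y + p * v) ^ 2 + b * v ^ 2) / 2) / (y + p * v) ^ 2)
      (fun v => a * p * y * (C * laplaceKernel ((1 + b / (a * p ^ 2)) / 2) (a * y ^ 2)⁻¹
        (a * p * y * v))) (Ioi 0) := by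
    intro v (hv : 0 < v)
    have h_exp : -(a * (y + p * v) ^ 2 + b * v ^ 2) / 2 = -(a * y ^ 2) / 2 + (-(a * p * y * v) -
        (1 + b / (a * p ^ 2)) / 2 * (a * y ^ 2)⁻¹ * (a * p * y * v) ^ 2) := by
      field_simp
      ring
    have h_frac : 1 + (a * y ^ 2)⁻¹ * (a * p * y * v) = (y + p * v) / y := by
      field_simp
    simp only [C, laplaceKernel, h_exp, exp_add, h_frac]
    have : y + p * v ≠ 0 := by positivity
    field_simp
  rw [setIntegral_congr_fun measurableSet_Ioi h_subst, integral_const_mul,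
    integral_comp_mul_left_Ioi (fun s => C * laplaceKernel _ _ s) 0 hm, mul_zero, smul_eq_mul,
    integral_const_mul]
  field_simp

theorem tendsto_integral_exp_quadratic_div_sq {a b p : ℝ} (ha : 0 < a) (hb : 0 ≤ b)
    (hp : 0 < p) :
    Tendsto (fun y =>
      (∫ v in Ioi 0, exp (-(a * (y + p * v) ^ 2 + b * v ^ 2) / 2) / (y + p * v) ^ 2) /
        (exp (-(a * y ^ 2) / 2) / (a * p * y ^ 3))) atTop (𝓝 1) := by
  have h_t : Tendsto (fun y : ℝ => (a * y ^ 2)⁻¹) atTop (𝓝[≥] 0) :=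
    tendsto_nhdsWithin_iff.mpr
      ⟨((tendsto_pow_atTop two_ne_zero).const_mul_atTop ha).inv_tendsto_atTop,
        .of_forall fun y => mem_Ici.mpr (by positivity)⟩
  have hκ : 0 ≤ (1 + b / (a * p ^ 2)) / 2 := by positivity
  refine ((tendsto_integral_laplaceKernel hκ).comp h_t).congr' ?_
  filter_upwards [eventually_gt_atTop 0] with y hy
  rw [Function.comp_apply, integral_exp_quadratic_div_sq_eq b ha hp hy,
    mul_div_cancel_left₀ _ (by positivity)]

lemma jointTail_integrand_eq (β : ℝ) {α l x v : ℝ} (hα : 0 < α) (hl : l ≠ 0) (hx : x < 0)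
    (hv : 0 < v) :
    (1 / π) * exp (-(1 + β ^ 2) * ((x - α * v) * l / α) ^ 2 / 2) * (1 / (β * (1 + β ^ 2))) *
        ((x - α * v) * l / α) ^ (-2 : ℤ) * halfNormalPdf v =
      sqrt (2 / π) * α ^ 2 / (π * β * (1 + β ^ 2) * l ^ 2) *
        (exp (-((1 + β ^ 2) * l ^ 2 / α ^ 2 * (-x + α * v) ^ 2 + 1 * v ^ 2) / 2) /
          (-x + α * v) ^ 2) := by
  have : x - α * v ≠ 0 := by nlinarith
  have : -x + α * v ≠ 0 := by nlinarith
  have h_exp : exp (-((1 + β ^ 2) * l ^ 2 / α ^ 2 * (-x + α * v) ^ 2 + 1 * v ^ 2) / 2) =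
      exp (-(1 + β ^ 2) * ((x - α * v) * l / α) ^ 2 / 2) * exp (-v ^ 2 / 2) := by
    rw [← exp_add]
    congr 1
    field_simp
    ring
  simp only [halfNormalPdf, if_pos hv, zpow_neg, zpow_two, h_exp]
  field_simp
  ring

/-- Asymptotics of the dominant term of the joint tail integral:
∫₀^∞ (1/π) e^{-(1+β²)((x-αv)λ/α)²/2} (1/(β(1+β²))) ((x-αv)λ/α)⁻² f_V(v) dv
  ~ (α³/(πλ⁴β(1+β²)²)) √(2/π) |x|⁻³ e^{-(λ²/(2α²))(1+β²)x²}  as x → -∞. -/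
theorem joint_tail_dominant_term (α l β : ℝ) (hα : 0 < α) (hl : 0 < l) (hβ : 0 < β) :
    Tendsto (fun x : ℝ =>
      (∫ v in Set.Ioi (0 : ℝ),
        (1 / π) * Real.exp (-(1 + β ^ 2) * ((x - α * v) * l / α) ^ 2 / 2) *
          (1 / (β * (1 + β ^ 2))) * ((x - α * v) * l / α) ^ (-2 : ℤ) * halfNormalPdf v) /
      ((α ^ 3 / (π * l ^ 4 * β * (1 + β ^ 2) ^ 2)) * Real.sqrt (2 / π) *
        |x| ^ (-3 : ℤ) * Real.exp (-(l ^ 2 / (2 * α ^ 2)) * (1 + β ^ 2) * x ^ 2)))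
      atBot (nhds 1) := by
  set a := (1 + β ^ 2) * l ^ 2 / α ^ 2
  set K := sqrt (2 / π) * α ^ 2 / (π * β * (1 + β ^ 2) * l ^ 2)
  have hK : K ≠ 0 := by positivity
  refine ((tendsto_integral_exp_quadratic_div_sq (a := a) (by positivity) zero_le_one hα).comp
    tendsto_neg_atBot_atTop).congr' ?_
  filter_upwards [eventually_lt_atBot 0] with x hx
  have h_scale :
      (α ^ 3 / (π * l ^ 4 * β * (1 + β ^ 2) ^ 2)) * sqrt (2 / π) * |x| ^ (-3 : ℤ) *
        exp (-(l ^ 2 / (2 * α ^ 2)) * (1 + β ^ 2) * x ^ 2) =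
      K * (exp (-(a * (-x) ^ 2) / 2) / (a * α * (-x) ^ 3)) := by
    rw [abs_of_neg hx, zpow_neg]
    simp only [a, K]
    field_simp
  rw [Function.comp_apply, setIntegral_congr_fun measurableSet_Ioi
    fun v hv => jointTail_integrand_eq β hα hl.ne' hx hv, integral_const_mul, h_scale,
    mul_div_mul_left _ _ hK]
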